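/- Suppose Assumptions (A1) and (A2) hold and the training data satisfy conditions (B1) and (B2). Then the training datapoints are nearly orthogonal: for all 1 ≤ i ≠ k ≤ n, |⟨x_i, x_k⟩| / (‖x_i‖·‖x_k‖) ≤ 2/(C n²). -/
import Mathlib


open MeasureTheory ProbabilityTheory BigOperators Filter
open scoped ENNReal NNReal

noncomputable section

namespace XOR

attribute [local instance] Classical.propDecidable

/-! ### Vectors, the network, and gradient descent -/

/-- Euclidean dot product on `Fin p → ℝ`. -/
def dot {p : ℕ} (x y : Fin p → ℝ) : ℝ := ∑ k, x k * y k

/-- Euclidean norm. -/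
def nrm {p : ℕ} (x : Fin p → ℝ) : ℝ := Real.sqrt (dot x x)

/-- The ReLU activation. -/
def relu (z : ℝ) : ℝ := max z 0

/-- (A choice of) the derivative of the ReLU. -/
def reluD (z : ℝ) : ℝ := if 0 < z then 1 else 0

/-- The two-layer ReLU network `f(x; W) = ∑ j, a j * φ(⟨w_j, x⟩)`. -/
def nnet {p m : ℕ} (a : Fin m → ℝ) (W : Fin m → Fin p → ℝ) (x : Fin p → ℝ) : ℝ :=
  ∑ j, a j * relu (dot (W j) x)

/-- `g(z) = -ℓ'(z) = 1/(1+e^z)` for the logistic loss `ℓ(z) = log(1+e^{-z})`. -/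
def lossG (z : ℝ) : ℝ := 1 / (1 + Real.exp z)

/-- One step of gradient descent on the first-layer weights:
`w_j^{(t+1)} = w_j^{(t)} + (α a_j / n) ∑ i g_i^{(t)} φ'(⟨w_j^{(t)}, x_i⟩) y_i x_i`. -/
def gdStep {n p m : ℕ} (α : ℝ) (X : Fin n → Fin p → ℝ) (Y : Fin n → ℝ)
    (a : Fin m → ℝ) (W : Fin m → Fin p → ℝ) : Fin m → Fin p → ℝ :=
  fun j k => W j k + (α * a j / n) *
    ∑ i, lossG (Y i * nnet a W (X i)) * reluD (dot (W j) (X i)) * (Y i * X i k)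

/-- The gradient descent iterates `W^{(t)}`. -/
def gdIter {n p m : ℕ} (α : ℝ) (X : Fin n → Fin p → ℝ) (Y : Fin n → ℝ)
    (a : Fin m → ℝ) (W0 : Fin m → Fin p → ℝ) : ℕ → Fin m → Fin p → ℝ
  | 0 => W0
  | t + 1 => gdStep α X Y a (gdIter α X Y a W0 t)

/-- Frobenius norm of the first-layer weight matrix. -/
def frob {p m : ℕ} (W : Fin m → Fin p → ℝ) : ℝ :=
  Real.sqrt (∑ j, ∑ k, (W j k) ^ 2)

/-! ### The XOR cluster structure -/

/-- The four cluster centers `+μ₁, -μ₁, +μ₂, -μ₂`, indexed by `Fin 4`. -/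
def ctr {p : ℕ} (μ1 μ2 : Fin p → ℝ) : Fin 4 → Fin p → ℝ := ![μ1, -μ1, μ2, -μ2]

/-- The clean label of each cluster. -/
def cl : Fin 4 → ℝ := ![1, 1, -1, -1]

/-- The index of the opposite center: `ν ↦ -ν`. -/
def negIdx : Fin 4 → Fin 4 := ![1, 0, 3, 2]

/-- The set of the four cluster centers. -/
def centers {p : ℕ} (μ1 μ2 : Fin p → ℝ) : Set (Fin p → ℝ) := {μ1, -μ1, μ2, -μ2}

/-- Structural hypotheses on the means: orthogonality and equal norms. -/
def MeanHyp {p : ℕ} (μ1 μ2 : Fin p → ℝ) : Prop :=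
  dot μ1 μ2 = 0 ∧ nrm μ1 = nrm μ2

/-- Basic constraints on the parameters: `η ∈ [0, 1/2)`, `α > 0`, `ω_init ≥ 0`. -/
def ParamHyp (η α winit : ℝ) : Prop :=
  0 ≤ η ∧ η < 1 / 2 ∧ 0 < α ∧ 0 ≤ winit

/-- Assumptions (A1)–(A6), where `μn = ‖μ‖`:
(A1) `‖μ‖² ≥ C n^{0.51} √p`, (A2) `p ≥ C n² ‖μ‖²`, (A3) `η ≤ 1/C`,
(A4) `α ≤ 1/(C n p)`, (A5) `ω_init n m^{3/2} p ≤ α ‖μ‖²`, (A6) `m ≥ C n^{0.02}`. -/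
def Assum (C : ℝ) (n p m : ℕ) (μn η α winit : ℝ) : Prop :=
  C * (n : ℝ) ^ (0.51 : ℝ) * Real.sqrt p ≤ μn ^ 2 ∧
  C * (n : ℝ) ^ 2 * μn ^ 2 ≤ (p : ℝ) ∧
  η ≤ 1 / C ∧
  α ≤ 1 / (C * n * p) ∧
  winit * n * (m : ℝ) ^ ((3 : ℝ) / 2) * (p : ℝ) ≤ α * μn ^ 2 ∧
  C * (n : ℝ) ^ (0.02 : ℝ) ≤ (m : ℝ)

/-! ### The probability model

The randomness is generated from canonical sources: for each training sample a
uniform cluster index in `Fin 4`, standard Gaussian noise in `ℝ^p`, and a standard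
Gaussian variable whose CDF-value is used as the (uniform) label-flip coin; for
the network, uniform signs in `Bool` for the second layer, and standard Gaussian
first-layer noise which is scaled by `ω_init`. -/

abbrev Vec (p : ℕ) := Fin p → ℝ

/-- Sample space: cluster indices, data noise, flip coins, second-layer signs,
and unscaled first-layer initialization. -/
abbrev Sample (n p m : ℕ) :=
  (Fin n → Fin 4) × (Fin n → Vec p) × (Fin n → ℝ) × (Fin m → Bool) × (Fin m → Vec p)

/-- The standard Gaussian measure on `ℝ^p`. -/
def stdG (p : ℕ) : Measure (Vec p) := Measure.pi fun _ => gaussianReal 0 1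

/-- The joint law of all randomness. -/
def sampleMeasure (n p m : ℕ) : Measure (Sample n p m) :=
  ((PMF.uniformOfFintype (Fin n → Fin 4)).toMeasure).prod
    ((Measure.pi fun _ : Fin n => stdG p).prod
      ((Measure.pi fun _ : Fin n => gaussianReal 0 1).prod
        (((PMF.uniformOfFintype (Fin m → Bool)).toMeasure).prod
          (Measure.pi fun _ : Fin m => stdG p))))

/-- The training inputs `x_i = x̄_i + ξ_i`. -/
def trainX {n p m : ℕ} (μ1 μ2 : Vec p) (ω : Sample n p m) : Fin n → Vec p :=
  fun i => ctr μ1 μ2 (ω.1 i) + ω.2.1 i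

/-- The (possibly flipped) training labels: the label is flipped iff the uniform
variable `Φ(g_i)` is `< η`, which happens with probability `η`. -/
def trainY {n p m : ℕ} (η : ℝ) (ω : Sample n p m) : Fin n → ℝ :=
  fun i => (if cdf (gaussianReal 0 1) (ω.2.2.1 i) < η then -1 else 1) * cl (ω.1 i)

/-- The second-layer weights `a_j ∈ {± 1/√m}`. -/
def secondLayer {n p m : ℕ} (ω : Sample n p m) : Fin m → ℝ :=
  fun j => if ω.2.2.2.1 j then 1 / Real.sqrt m else -(1 / Real.sqrt m)

/-- The initialization `w_j^{(0)} ∼ N(0, ω_init² I_p)`. -/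
def initW {n p m : ℕ} (winit : ℝ) (ω : Sample n p m) : Fin m → Vec p :=
  fun j k => winit * ω.2.2.2.2 j k

/-- The trained first-layer weights `W^{(t)}`. -/
def netW {n p m : ℕ} (μ1 μ2 : Vec p) (η α winit : ℝ) (ω : Sample n p m) (t : ℕ) :
    Fin m → Vec p :=
  gdIter α (trainX μ1 μ2 ω) (trainY η ω) (secondLayer ω) (initW winit ω) t

/-- The clean test distribution `P_clean` on `ℝ^p × ℝ`. -/
def Pclean (p : ℕ) (μ1 μ2 : Vec p) : Measure (Vec p × ℝ) :=
  Measure.map (fun w : Fin 4 × Vec p => (ctr μ1 μ2 w.1 + w.2, cl w.1))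
    (((PMF.uniformOfFintype (Fin 4)).toMeasure).prod (stdG p))

/-- The Gaussian measure `N(ν, I_p)` at center index `q`. -/
def gaussAt {p : ℕ} (μ1 μ2 : Vec p) (q : Fin 4) : Measure (Vec p) :=
  Measure.map (fun z => ctr μ1 μ2 q + z) (stdG p)

/-- The clean test error of the classifier `sgn ∘ f(·; a, W)`. -/
def testErr {p m : ℕ} (μ1 μ2 : Vec p) (a : Fin m → ℝ) (W : Fin m → Vec p) : ℝ :=
  ((Pclean p μ1 μ2) {xy : Vec p × ℝ | xy.2 ≠ Real.sign (nnet a W xy.1)}).toReal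

/-! ### Counts, alignment, and the "good run" conditions -/

/-- `c_ν`: number of clean samples in the cluster with center index `q`. -/
def cntC {n : ℕ} (u : Fin n → Fin 4) (Y : Fin n → ℝ) (q : Fin 4) : ℕ :=
  (Finset.univ.filter fun i => u i = q ∧ Y i = cl q).card

/-- `n_ν`: number of noisy samples in the cluster with center index `q`. -/
def cntN {n : ℕ} (u : Fin n → Fin 4) (Y : Fin n → ℝ) (q : Fin 4) : ℕ :=
  (Finset.univ.filter fun i => u i = q ∧ Y i ≠ cl q).card

/-- The clean samples of cluster `q` activating neuron `j` for weights `W`. -/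
def actC {n p m : ℕ} (u : Fin n → Fin 4) (X : Fin n → Vec p) (Y : Fin n → ℝ)
    (W : Fin m → Vec p) (q : Fin 4) (j : Fin m) : Finset (Fin n) :=
  Finset.univ.filter fun i => u i = q ∧ Y i = cl q ∧ 0 < dot (W j) (X i)

/-- The noisy samples of cluster `q` activating neuron `j` for weights `W`. -/
def actN {n p m : ℕ} (u : Fin n → Fin 4) (X : Fin n → Vec p) (Y : Fin n → ℝ)
    (W : Fin m → Vec p) (q : Fin 4) (j : Fin m) : Finset (Fin n) :=
  Finset.univ.filter fun i => u i = q ∧ Y i ≠ cl q ∧ 0 < dot (W j) (X i)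

/-- `d_{ν,j} = |C_{ν,j}| - |N_{ν,j}|`. -/
def dval {n p m : ℕ} (u : Fin n → Fin 4) (X : Fin n → Vec p) (Y : Fin n → ℝ)
    (W : Fin m → Vec p) (q : Fin 4) (j : Fin m) : ℤ :=
  ((actC u X Y W q j).card : ℤ) - ((actN u X Y W q j).card : ℤ)

/-- `D_{ν,j} = d_{ν,j} - d_{-ν,j}`. -/
def Dval {n p m : ℕ} (u : Fin n → Fin 4) (X : Fin n → Vec p) (Y : Fin n → ℝ)
    (W : Fin m → Vec p) (q : Fin 4) (j : Fin m) : ℤ :=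
  dval u X Y W q j - dval u X Y W (negIdx q) j

/-- Neuron `j` is `(ν, κ)`-aligned (w.r.t. the initialization `W0`). -/
def Aligned {n p m : ℕ} (u : Fin n → Fin 4) (X : Fin n → Vec p) (Y : Fin n → ℝ)
    (W0 : Fin m → Vec p) (κ : ℝ) (q : Fin 4) (j : Fin m) : Prop :=
  (n : ℝ) ^ ((1 : ℝ) / 2 - κ) < (Dval u X Y W0 q j : ℝ) ∧
  max ((dval u X Y W0 (negIdx q) j : ℝ)) ((dval u X Y W0 q j : ℝ)) <
    min (cntC u Y q : ℝ) (cntC u Y (negIdx q) : ℝ) -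
      2 * ((cntN u Y q : ℝ) + (cntN u Y (negIdx q) : ℝ)) - Real.sqrt n

/-- Condition (B1). -/
def CondB1 {n p : ℕ} (μ1 μ2 : Vec p) (u : Fin n → Fin 4) (X : Fin n → Vec p) : Prop :=
  ∀ k : Fin n,
    (∀ ν ∈ centers μ1 μ2, dot (X k - ctr μ1 μ2 (u k)) ν ≤
        10 * Real.sqrt (Real.log n) * nrm μ1) ∧
    |nrm (X k) ^ 2 - p - nrm μ1 ^ 2| ≤ 10 * Real.sqrt (p * Real.log n)

/-- Condition (B2). -/
def CondB2 {n p : ℕ} (μ1 μ2 : Vec p) (u : Fin n → Fin 4) (X : Fin n → Vec p) : Prop :=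
  ∀ i k : Fin n, i ≠ k →
    |dot (X i) (X k) - dot (ctr μ1 μ2 (u i)) (ctr μ1 μ2 (u k))| ≤
      10 * Real.sqrt (p * Real.log n)

/-- Condition (B3). -/
def CondB3 {n : ℕ} (ε η : ℝ) (u : Fin n → Fin 4) (Y : Fin n → ℝ) : Prop :=
  ∀ q : Fin 4,
    |(cntC u Y q : ℝ) + (cntN u Y q : ℝ) - n / 4| ≤ Real.sqrt (ε * n * Real.log n) ∧
    |(cntN u Y q : ℝ) - η * ((cntC u Y q : ℝ) + (cntN u Y q : ℝ))| ≤
      Real.sqrt (ε * η * n * Real.log n)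

/-- Condition (B4). -/
def CondB4 {n : ℕ} (ε η : ℝ) (u : Fin n → Fin 4) (Y : Fin n → ℝ) : Prop :=
  ∀ q : Fin 4,
    (n : ℝ) ^ ((1 : ℝ) / 2 - ε) ≤
      |(cntC u Y q : ℝ) + (cntN u Y q : ℝ) -
        (cntC u Y (negIdx q) : ℝ) - (cntN u Y (negIdx q) : ℝ)| ∧
    η * (n : ℝ) ^ ((1 : ℝ) / 2 - ε) ≤ |(cntN u Y q : ℝ) - (cntN u Y (negIdx q) : ℝ)|

/-- Conditions (B1)–(B4) together. -/
def CondB {n p : ℕ} (ε : ℝ) (μ1 μ2 : Vec p) (η : ℝ) (u : Fin n → Fin 4)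
    (X : Fin n → Vec p) (Y : Fin n → ℝ) : Prop :=
  CondB1 μ1 μ2 u X ∧ CondB2 μ1 μ2 u X ∧ CondB3 ε η u Y ∧ CondB4 ε η u Y

/-- Condition (C1): `‖W^{(0)}‖_F² ≤ (3/2) ω_init² m p`. -/
def CondC1 {p m : ℕ} (winit : ℝ) (W0 : Fin m → Vec p) : Prop :=
  ∑ j, ∑ k, (W0 j k) ^ 2 ≤ 3 / 2 * winit ^ 2 * m * p

/-- The positive neurons `J_Pos`. -/
def posNeurons {m : ℕ} (a : Fin m → ℝ) : Finset (Fin m) :=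
  Finset.univ.filter fun j => 0 < a j

/-- The negative neurons `J_Neg`. -/
def negNeurons {m : ℕ} (a : Fin m → ℝ) : Finset (Fin m) :=
  Finset.univ.filter fun j => a j < 0

/-- Condition (C2): `|J_Pos| ≥ m/3` and `|J_Neg| ≥ m/3`. -/
def CondC2 {m : ℕ} (a : Fin m → ℝ) : Prop :=
  (m : ℝ) / 3 ≤ (posNeurons a).card ∧ (m : ℝ) / 3 ≤ (negNeurons a).card

/-- Condition (D1). -/
def CondD1 {n p m : ℕ} (u : Fin n → Fin 4) (X : Fin n → Vec p)
    (a : Fin m → ℝ) (W0 : Fin m → Vec p) : Prop :=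
  ∀ i : Fin n,
    (m : ℝ) / 7 ≤ ((posNeurons a).filter fun j => 0 < dot (W0 j) (X i)).card ∧
    (m : ℝ) / 7 ≤ ((negNeurons a).filter fun j => 0 < dot (W0 j) (X i)).card

/-- Condition (D2). -/
def CondD2 {n p m : ℕ} (ε : ℝ) (u : Fin n → Fin 4) (X : Fin n → Vec p) (Y : Fin n → ℝ)
    (a : Fin m → ℝ) (W0 : Fin m → Vec p) : Prop :=
  ∀ q : Fin 4, ∀ κ : ℝ, 0 ≤ κ → κ < 1 / 2 →
    (m : ℝ) * (n : ℝ) ^ (-(10 * ε)) ≤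
      ((posNeurons a).filter fun j => Aligned u X Y W0 κ q j).card ∧
    (m : ℝ) * (n : ℝ) ^ (-(10 * ε)) ≤
      ((negNeurons a).filter fun j => Aligned u X Y W0 κ q j).card

/-- Condition (D3). -/
def CondD3 {n p m : ℕ} (ε : ℝ) (u : Fin n → Fin 4) (X : Fin n → Vec p) (Y : Fin n → ℝ)
    (a : Fin m → ℝ) (W0 : Fin m → Vec p) : Prop :=
  ∀ q : Fin 4,
    (1 - 10 * (n : ℝ) ^ (-(20 * ε))) * (posNeurons a).card ≤
      ((posNeurons a).filter fun j =>
        Aligned u X Y W0 (20 * ε) q j ∨ Aligned u X Y W0 (20 * ε) (negIdx q) j).card ∧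
    (1 - 10 * (n : ℝ) ^ (-(20 * ε))) * (negNeurons a).card ≤
      ((negNeurons a).filter fun j =>
        Aligned u X Y W0 (20 * ε) q j ∨ Aligned u X Y W0 (20 * ε) (negIdx q) j).card

/-- Condition (D4). -/
def CondD4 {n p m : ℕ} (u : Fin n → Fin 4) (X : Fin n → Vec p) (Y : Fin n → ℝ)
    (a : Fin m → ℝ) (W0 : Fin m → Vec p) : Prop :=
  ∀ q : Fin 4, ∀ κ : ℝ, 0 ≤ κ → κ < 1 / 2 →
    ((n : ℝ) / 10) * ((posNeurons a).filter fun j => Aligned u X Y W0 κ q j).card ≤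
      (∑ j ∈ (posNeurons a).filter (fun j => Aligned u X Y W0 κ q j),
        ((cntC u Y q : ℝ) - (cntN u Y q : ℝ) - (dval u X Y W0 (negIdx q) j : ℝ))) ∧
    ((n : ℝ) / 10) * ((negNeurons a).filter fun j => Aligned u X Y W0 κ q j).card ≤
      (∑ j ∈ (negNeurons a).filter (fun j => Aligned u X Y W0 κ q j),
        ((cntC u Y q : ℝ) - (cntN u Y q : ℝ) - (dval u X Y W0 (negIdx q) j : ℝ)))

/-- Conditions (D1)–(D4) together. -/
def CondD {n p m : ℕ} (ε : ℝ) (u : Fin n → Fin 4) (X : Fin n → Vec p) (Y : Fin n → ℝ)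
    (a : Fin m → ℝ) (W0 : Fin m → Vec p) : Prop :=
  CondD1 u X a W0 ∧ CondD2 ε u X Y a W0 ∧ CondD3 ε u X Y a W0 ∧ CondD4 u X Y a W0

/-- A "good run": conditions (B1)–(B4), (C1)–(C2) and (D1)–(D4) all hold. -/
def GoodRun {n p m : ℕ} (ε : ℝ) (μ1 μ2 : Vec p) (η winit : ℝ) (u : Fin n → Fin 4)
    (X : Fin n → Vec p) (Y : Fin n → ℝ) (a : Fin m → ℝ) (W0 : Fin m → Vec p) : Prop :=
  CondB ε μ1 μ2 η u X Y ∧ CondC1 winit W0 ∧ CondC2 a ∧ CondD ε u X Y a W0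

/-- Labels take values in `{±1}`. -/
def ModelData {n : ℕ} (Y : Fin n → ℝ) : Prop := ∀ i, Y i = 1 ∨ Y i = -1

/-- Second-layer weights take values in `{±1/√m}`. -/
def ModelLayer {m : ℕ} (a : Fin m → ℝ) : Prop :=
  ∀ j, a j = 1 / Real.sqrt m ∨ a j = -(1 / Real.sqrt m)

end XOR

namespace XOR

attribute [local instance] Classical.propDecidable

lemma dot_self_nonneg' {p : ℕ} (x : Vec p) : 0 ≤ dot x x :=
  Finset.sum_nonneg fun k _ => mul_self_nonneg _

lemma nrm_sq {p : ℕ} (x : Vec p) : nrm x ^ 2 = dot x x :=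
  Real.sq_sqrt (dot_self_nonneg' x)

lemma nrm_nonneg {p : ℕ} (x : Vec p) : 0 ≤ nrm x := Real.sqrt_nonneg _

lemma dot_comm' {p : ℕ} (x y : Vec p) : dot x y = dot y x := by
  simp [dot, mul_comm]

lemma dot_neg_left' {p : ℕ} (x y : Vec p) : dot (-x) y = -dot x y := by
  simp [dot, neg_mul, Finset.sum_neg_distrib]

lemma dot_neg_right' {p : ℕ} (x y : Vec p) : dot x (-y) = -dot x y := by
  simp [dot, mul_neg, Finset.sum_neg_distrib]

lemma abs_ctr_dot {p : ℕ} {μ1 μ2 : Vec p} (h : MeanHyp μ1 μ2) (q q' : Fin 4) :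
    |dot (ctr μ1 μ2 q) (ctr μ1 μ2 q')| ≤ nrm μ1 ^ 2 := by
  obtain ⟨h12, hnn⟩ := h
  have h21 : dot μ2 μ1 = 0 := by rw [dot_comm']; exact h12
  have h22 : dot μ2 μ2 = dot μ1 μ1 := by
    have := congrArg (fun t => t ^ 2) hnn
    simpa [nrm_sq] using this.symm
  have h11 : nrm μ1 ^ 2 = dot μ1 μ1 := nrm_sq μ1
  have hpos : 0 ≤ dot μ1 μ1 := dot_self_nonneg' μ1
  fin_cases q <;> fin_cases q' <;>
    simp [ctr, dot_neg_left', dot_neg_right', h12, h21, h22, h11, abs_of_nonneg hpos,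
      abs_neg] <;> linarith

set_option maxHeartbeats 1000000 in
/-- Corollary 4.2, near-orthogonality of the training data:
under (A1)–(A2) and conditions (B1)–(B2), for all `i ≠ k`,
`|⟨x_i, x_k⟩|/(‖x_i‖‖x_k‖) ≤ 2/(C n²)`. -/
theorem near_orthogonality :
    ∃ (C₀ : ℝ) (N₀ : ℕ),
      ∀ C : ℝ, C₀ ≤ C →
      ∀ (n p : ℕ) (μ1 μ2 : Vec p) (u : Fin n → Fin 4) (X : Fin n → Vec p),
        N₀ ≤ n →
        MeanHyp μ1 μ2 →
        C * (n : ℝ) ^ (0.51 : ℝ) * Real.sqrt p ≤ nrm μ1 ^ 2 →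
        C * (n : ℝ) ^ 2 * nrm μ1 ^ 2 ≤ (p : ℝ) →
        CondB1 μ1 μ2 u X →
        CondB2 μ1 μ2 u X →
        ∀ i k : Fin n, i ≠ k →
          |dot (X i) (X k)| / (nrm (X i) * nrm (X k)) ≤ 2 / (C * (n : ℝ) ^ 2) := by
  refine ⟨20, 1, ?_⟩
  intro C hC n p μ1 μ2 u X hn hmean hA1 hA2 hB1 hB2 i k hik
  have hC0 : (0 : ℝ) < C := by linarith
  have hn1 : (1 : ℝ) ≤ (n : ℝ) := by exact_mod_cast hn
  have hn2 : (1 : ℝ) ≤ (n : ℝ) ^ 2 := one_le_pow₀ hn1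
  rcases Nat.eq_zero_or_pos p with hp | hp
  · subst hp
    have hd : dot (X i) (X k) = 0 := by simp [dot]
    rw [hd]
    simp only [abs_zero, zero_div]
    positivity
  -- now p ≥ 1
  have hp1 : (1 : ℝ) ≤ (p : ℝ) := by exact_mod_cast hp
  set M : ℝ := nrm μ1 ^ 2 with hM
  have hM0 : 0 ≤ M := by positivity
  set S : ℝ := 10 * Real.sqrt ((p : ℝ) * Real.log n) with hS
  have hS0 : 0 ≤ S := by positivity
  have hsp0 : (0 : ℝ) < Real.sqrt p := Real.sqrt_pos.mpr (by linarith)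
  -- √p is large
  have hsqp : C ^ 2 * (n : ℝ) ^ 2 * (n : ℝ) ^ (0.51 : ℝ) * Real.sqrt p ≤ (p : ℝ) := by
    calc C ^ 2 * (n : ℝ) ^ 2 * (n : ℝ) ^ (0.51 : ℝ) * Real.sqrt p
        = C * (n : ℝ) ^ 2 * (C * (n : ℝ) ^ (0.51 : ℝ) * Real.sqrt p) := by ring
      _ ≤ C * (n : ℝ) ^ 2 * M := by
          apply mul_le_mul_of_nonneg_left hA1 (by positivity)
      _ ≤ (p : ℝ) := hA2
  have hsqp' : C ^ 2 * (n : ℝ) ^ 2 * (n : ℝ) ^ (0.51 : ℝ) ≤ Real.sqrt p := by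
    have hps : Real.sqrt p * Real.sqrt p = (p : ℝ) := Real.mul_self_sqrt (by positivity)
    have h : C ^ 2 * (n : ℝ) ^ 2 * (n : ℝ) ^ (0.51 : ℝ) * Real.sqrt p ≤
        Real.sqrt p * Real.sqrt p := by linarith
    exact le_of_mul_le_mul_right h hsp0
  -- bound on S
  have hlog : Real.log n ≤ (n : ℝ) := by
    have := Real.log_le_sub_one_of_pos (by linarith : (0:ℝ) < (n:ℝ))
    linarith
  have hlog0 : 0 ≤ Real.log n := Real.log_nonneg hn1
  have hSle : S ≤ 10 * Real.sqrt p * Real.sqrt n := by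
    rw [hS, Real.sqrt_mul (by positivity)]
    have := Real.sqrt_le_sqrt hlog
    nlinarith [Real.sqrt_nonneg (Real.log n), Real.sqrt_nonneg (n:ℝ)]
  have hhalf : Real.sqrt (n : ℝ) ≤ (n : ℝ) ^ (0.51 : ℝ) := by
    rw [Real.sqrt_eq_rpow]
    rcases eq_or_lt_of_le hn1 with h1 | h1
    · rw [← h1]; simp
    · exact (Real.rpow_le_rpow_left_iff h1).mpr (by norm_num)
  have hkey : 2 * C * (n : ℝ) ^ 2 * S ≤ (p : ℝ) := by
    have h1 : 2 * C * (n : ℝ) ^ 2 * S ≤ 20 * C * (n : ℝ) ^ 2 * Real.sqrt n * Real.sqrt p := by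
      nlinarith [mul_le_mul_of_nonneg_left hSle (by positivity : (0:ℝ) ≤ 2 * C * (n:ℝ)^2)]
    have h2 : 20 * C * (n : ℝ) ^ 2 * Real.sqrt n ≤ C ^ 2 * (n : ℝ) ^ 2 * (n : ℝ) ^ (0.51 : ℝ) := by
      have h20 : 20 * Real.sqrt n ≤ C * (n : ℝ) ^ (0.51 : ℝ) := by
        calc 20 * Real.sqrt n ≤ 20 * (n : ℝ) ^ (0.51 : ℝ) := by
              nlinarith [Real.sqrt_nonneg (n:ℝ)]
          _ ≤ C * (n : ℝ) ^ (0.51 : ℝ) := by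
              have : (0:ℝ) ≤ (n : ℝ) ^ (0.51 : ℝ) := by positivity
              nlinarith
      have hm := mul_le_mul_of_nonneg_left h20 (by positivity : (0:ℝ) ≤ C * (n:ℝ)^2)
      nlinarith [hm]
    calc 2 * C * (n : ℝ) ^ 2 * S
        ≤ 20 * C * (n : ℝ) ^ 2 * Real.sqrt n * Real.sqrt p := h1
      _ ≤ C ^ 2 * (n : ℝ) ^ 2 * (n : ℝ) ^ (0.51 : ℝ) * Real.sqrt p := by
          nlinarith
      _ ≤ (p : ℝ) := hsqp
  have h40 : 40 * S ≤ (p : ℝ) := by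
    have h1 : C * 1 ≤ C * (n:ℝ)^2 := mul_le_mul_of_nonneg_left hn2 (le_of_lt hC0)
    have h2 : (40:ℝ) ≤ 2 * C * (n:ℝ)^2 := by linarith
    have h3 := mul_le_mul_of_nonneg_right h2 hS0
    linarith
  have hpS : (0 : ℝ) < (p : ℝ) - S := by linarith
  -- denominator bound
  have hden1 : ∀ j : Fin n, (p : ℝ) - S ≤ nrm (X j) ^ 2 := by
    intro j
    have := (hB1 j).2
    have habs := abs_le.mp this
    have : (p : ℝ) + M - S ≤ nrm (X j) ^ 2 := by linarith [habs.1]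
    linarith
  have hden : (p : ℝ) - S ≤ nrm (X i) * nrm (X k) := by
    have hi := hden1 i
    have hk := hden1 k
    have hm := mul_le_mul hi hk (le_of_lt hpS) (sq_nonneg (nrm (X i)))
    nlinarith [hm, mul_nonneg (nrm_nonneg (X i)) (nrm_nonneg (X k)), hpS]
  -- numerator bound
  have hnum : |dot (X i) (X k)| ≤ M + S := by
    have h2 := hB2 i k hik
    have hc := abs_ctr_dot hmean (u i) (u k)
    have htri := abs_sub_abs_le_abs_sub (dot (X i) (X k))
      (dot (ctr μ1 μ2 (u i)) (ctr μ1 μ2 (u k)))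
    linarith
  -- combine
  have step1 : |dot (X i) (X k)| / (nrm (X i) * nrm (X k)) ≤ (M + S) / ((p : ℝ) - S) :=
    div_le_div₀ (by linarith) hnum hpS hden
  refine step1.trans ?_
  rw [div_le_div_iff₀ hpS (by positivity)]
  nlinarith

end XOR
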